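/- arXiv:2103.14538 — 2 statements merged into one kernel-verified Lean document; each statement's English description precedes it below -/
import Mathlib

section
/- Suppose R : ℝ → ℝ is differentiable, satisfies R(x) = x - (1-η)·x·exp(-R₀·R(x)) with 0 < η < 1, R₀ > 0, and 0 ≤ R(x) ≤ x for all x ≥ 0. Then for any x > 0 with x·R₀·(1-η)·exp(-R₀·R(x)) < 1: if x > 1/R₀ then R'(x) > 1; if x = 1/R₀ then R'(x) = 1; and if x < 1/R₀ then R'(x) < 1. -/
theorem stmt_2 (η R₀ : ℝ) (hη0 : 0 < η) (hη1 : η < 1) (hR₀ : 0 < R₀)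
    (R : ℝ → ℝ) (hdiff : Differentiable ℝ R)
    (heq : ∀ x ≥ (0:ℝ), R x = x - (1 - η) * x * Real.exp (-R₀ * R x))
    (hbnd : ∀ x ≥ (0:ℝ), 0 ≤ R x ∧ R x ≤ x)
    (x : ℝ) (hx : 0 < x)
    (hcontr : x * R₀ * (1 - η) * Real.exp (-R₀ * R x) < 1) :
    (x > 1 / R₀ → deriv R x > 1) ∧
    (x = 1 / R₀ → deriv R x = 1) ∧
    (x < 1 / R₀ → deriv R x < 1) := by
  set d := deriv R x with hd
  set E := Real.exp (-R₀ * R x) with hE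
  have hEpos : 0 < E := Real.exp_pos _
  have hη' : 0 < 1 - η := by linarith
  -- R agrees with the implicit formula near x
  have hEq : R =ᶠ[nhds x] fun y => y - (1 - η) * y * Real.exp (-R₀ * R y) := by
    filter_upwards [Ioi_mem_nhds hx] with y hy
    exact heq y (le_of_lt hy)
  have hR : HasDerivAt R d x := (hdiff x).hasDerivAt
  have hg : HasDerivAt (fun y => y - (1 - η) * y * Real.exp (-R₀ * R y))
      (1 - ((1 - η) * 1 * E + (1 - η) * x * (E * (-R₀ * d)))) x := by
    have h1 : HasDerivAt (fun y : ℝ => (1 - η) * y) ((1 - η) * 1) x :=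
      (hasDerivAt_id x).const_mul (1 - η)
    have h2 : HasDerivAt (fun y => Real.exp (-R₀ * R y)) (E * (-R₀ * d)) x := by
      have : HasDerivAt (fun y => -R₀ * R y) (-R₀ * d) x := hR.const_mul (-R₀)
      exact (Real.hasDerivAt_exp (-R₀ * R x)).comp x this
    exact (hasDerivAt_id x).sub (h1.mul h2)
  have hkey : d = 1 - ((1 - η) * 1 * E + (1 - η) * x * (E * (-R₀ * d))) :=
    hR.unique (hg.congr_of_eventuallyEq hEq)
  have h1c : 0 < 1 - x * R₀ * (1 - η) * E := by linarith
  have hE' : 0 < (1 - η) * E := mul_pos hη' hEpos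
  refine ⟨?_, ?_, ?_⟩
  · intro h
    have hx1 : 1 < x * R₀ := by
      rw [gt_iff_lt, div_lt_iff₀ hR₀] at h
      linarith
    nlinarith [mul_pos hE' h1c]
  · intro h
    have hx1 : x * R₀ = 1 := by
      rw [h]; field_simp
    nlinarith [mul_pos hE' h1c]
  · intro h
    have hx1 : x * R₀ < 1 := by
      rw [lt_div_iff₀ hR₀] at h
      linarith
    nlinarith [mul_pos hE' h1c]
end

section
/- Let R : ℝ → ℝ satisfy R(x) = x - (1-η)·x·exp(-R₀·R(x)) with 0 ≤ R(x) ≤ x, 0 < η < 1, R₀ > 0, and suppose R is differentiable at x = 1 with 1 > 1/R₀ (i.e., R₀ > 1) and 1·R₀·(1-η)·exp(-R₀·R(1)) < 1. If C + η ≤ 1, then R'(1) > 1 ≥ C + η, so the maximal-density allocation x₁ = 1 is not an altruistic equilibrium. -/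
theorem stmt_16 (η R₀ C : ℝ) (hη0 : 0 < η) (hη1 : η < 1) (hR₀ : 0 < R₀)
    (hC : 0 < C) (R : ℝ → ℝ)
    (hbnd : ∀ x ≥ (0:ℝ), 0 ≤ R x ∧ R x ≤ x)
    (heq : ∀ x ≥ (0:ℝ), R x = x - (1 - η) * x * Real.exp (-R₀ * R x))
    (hdiff : DifferentiableAt ℝ R 1)
    (hR₀1 : 1 < R₀)
    (hcontr : 1 * R₀ * (1 - η) * Real.exp (-R₀ * R 1) < 1)
    (hCη : C + η ≤ 1) :
    1 < deriv R 1 ∧ C + η < deriv R 1 := by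
  set d := deriv R 1 with hd
  set E := Real.exp (-R₀ * R 1) with hE
  have hR : HasDerivAt R d 1 := hdiff.hasDerivAt
  have hexp : HasDerivAt (fun x => Real.exp (-R₀ * R x)) (E * (-R₀ * d)) 1 :=
    ((hR.const_mul (-R₀)).exp)
  have hmul : HasDerivAt (fun x => x * Real.exp (-R₀ * R x))
      (1 * E + (1:ℝ) * (E * (-R₀ * d))) 1 := by
    exact (hasDerivAt_id (1:ℝ)).mul hexp
  have hg : HasDerivAt (fun x => x - (1 - η) * (x * Real.exp (-R₀ * R x)))
      (1 - (1 - η) * (1 * E + (1:ℝ) * (E * (-R₀ * d)))) 1 :=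
    (hasDerivAt_id (1:ℝ)).sub (hmul.const_mul (1 - η))
  have hev : R =ᶠ[nhds (1:ℝ)] (fun x => x - (1 - η) * (x * Real.exp (-R₀ * R x))) := by
    filter_upwards [Ioi_mem_nhds (show (0:ℝ) < 1 by norm_num)] with x hx
    nth_rewrite 1 [heq x (le_of_lt hx)]
    ring
  have hkey : d = 1 - (1 - η) * (1 * E + (1:ℝ) * (E * (-R₀ * d))) := by
    have h1 : deriv R 1 = deriv (fun x => x - (1 - η) * (x * Real.exp (-R₀ * R x))) 1 :=
      hev.deriv_eq
    exact (hd.trans h1).trans hg.deriv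
  have hEpos : 0 < E := Real.exp_pos _
  have hApos : 0 < (1 - η) * E := by
    have h1η : 0 < 1 - η := by linarith
    positivity
  have hR1 : R 1 = 1 - (1 - η) * E := by
    have := heq 1 (by norm_num); linarith [this]
  have hA1 : (1 - η) * E ≤ 1 := by
    have := (hbnd 1 (by norm_num)).1
    linarith [hR1 ▸ this]
  have hcontr' : R₀ * ((1 - η) * E) < 1 := by nlinarith [hcontr]
  have h1d : 1 < d := by nlinarith [hkey, hApos, hA1, hcontr', hR₀1]
  exact ⟨h1d, by linarith⟩
end
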